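/- For all x, y ∈ R: Γ(x·y) = Γ(x)·y + β(x)·Γ(y) + Γ(β(x)·β(y)). (Relation (4) of the main theorem, the product formula for the Conner–Floyd operation.) -/
import Mathlib


/-- The product formula for the Conner–Floyd operation:
`Γ(x·y) = Γ(x)·y + β(x)·Γ(y) + Γ(β(x)·β(y))` for all `x, y ∈ R`,
where `β = s ∘ π` and `Γ` is defined by `e·Γ(x) = x − β(x)`.
(Relation (4) of the main theorem.) -/
theorem conner_floyd_product_formula
    {R S : Type*} [CommRing R] [CommRing S]
    (π : R →+* S) (hπ : Function.Surjective π)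
    (e : R) (he : Function.Injective (fun x : R => e * x))
    (hker : RingHom.ker π = Ideal.span {e})
    (s : S →+ R) (hs : ∀ t : S, π (s t) = t)
    (Γ : R → R) (hΓ : ∀ x : R, e * Γ x = x - s (π x))
    (β : R → R) (hβ : ∀ x : R, β x = s (π x)) :
    ∀ x y : R, Γ (x * y) = Γ x * y + β x * Γ y + Γ (β x * β y) := by
  intro x y
  apply he
  have key : π (β x * β y) = π (x * y) := by
    simp [hβ, map_mul, hs]
  simp only []
  rw [hΓ, mul_add, mul_add, ← mul_assoc e (Γ x) y, hΓ, mul_left_comm e (β x) (Γ y),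
    hΓ, hΓ, key, hβ, hβ]
  ring
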